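/- arXiv:0810.0962 — 2 statements merged into one kernel-verified Lean document; each statement's English description precedes it below -/
import Mathlib

section
/- (Double complex boundary identity.) With F^k = (L d)^k f and K^i = g d F^{i-1} (for i ≥ 1), K^0 = ∂, where f : P → E⊗C is a chain map, g its chain homotopy inverse, L : fg ≃ 1 a chain homotopy, and d the boundary of the resolution E: for all m ≥ 1, ∂F^m + (−1)^{m+1} F^m ∂ = Σ_{k=0}^{m−1} (−1)^k F^k K^{m−k} − d F^{m−1}, and ∂F^0 = F^0 ∂. -/
/-!
Write `Φ = L d`, so that `F^{m+1} = Φ F^m`. The homotopy relation `∂L = fg - 1 - L∂` together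
with `∂d = d∂` gives `∂F^{m+1} = f K^{m+1} - d F^m - Φ ∂F^m`, hence the defect
`D_m = ∂F^m + (-1)^{m+1} F^m ∂` satisfies `D_{m+1} = f K^{m+1} - d F^m - Φ D_m`, while splitting
off the `k = 0` term shows that `S_m = Σ_{k<m} (-1)^k F^k K^{m-k}` satisfies
`S_{m+1} = f K^{m+1} - Φ S_m`. Since `Φ d = L d d = 0`, the error term `d F^m` is invisible to
the next step, so induction from `D_0 = 0` (`f` is a chain map) gives `D_{m+1} = S_{m+1} - d F^m`.
-/

section
variable (R : Type) [Ring R] (P T : Type) [AddCommGroup P] [AddCommGroup T]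
  [Module R P] [Module R T]

/-- `F^k = (L d)^k f`. -/
def Fpow (f : P →ₗ[R] T) (d L : T →ₗ[R] T) : ℕ → (P →ₗ[R] T)
  | 0 => f
  | k + 1 => L ∘ₗ d ∘ₗ Fpow f d L k

/-- `K^0 = ∂`, `K^i = g d F^{i-1}` for `i ≥ 1`. -/
def Kmap (f : P →ₗ[R] T) (d L : T →ₗ[R] T) (g : T →ₗ[R] P) (dP : P →ₗ[R] P) :
    ℕ → (P →ₗ[R] P)
  | 0 => dP
  | i + 1 => g ∘ₗ d ∘ₗ Fpow R P T f d L i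

section
variable {R P T}
variable (f : P →ₗ[R] T) (g : T →ₗ[R] P) (d L dT : T →ₗ[R] T) (dP : P →ₗ[R] P)

def chainDefect (m : ℕ) : P →ₗ[R] T :=
  dT ∘ₗ Fpow R P T f d L m + ((-1 : ℤ) ^ (m + 1)) • (Fpow R P T f d L m ∘ₗ dP)

def correctionSum (m : ℕ) : P →ₗ[R] T :=
  ∑ k ∈ Finset.range m, ((-1 : ℤ) ^ k) • (Fpow R P T f d L k ∘ₗ Kmap R P T f d L g dP (m - k))

theorem Fpow_succ_eq_comp (k : ℕ) :
    Fpow R P T f d L (k + 1) = (L ∘ₗ d) ∘ₗ Fpow R P T f d L k :=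
  rfl

theorem correctionSum_succ (m : ℕ) :
    correctionSum f g d L dP (m + 1) =
      f ∘ₗ Kmap R P T f d L g dP (m + 1) - (L ∘ₗ d) ∘ₗ correctionSum f g d L dP m := by
  have hcomp : (L ∘ₗ d) ∘ₗ correctionSum f g d L dP m =
      ∑ k ∈ Finset.range m, ((-1 : ℤ) ^ k) •
        (Fpow R P T f d L (k + 1) ∘ₗ Kmap R P T f d L g dP (m - k)) := by
    simp only [correctionSum, Fpow_succ_eq_comp, LinearMap.comp_assoc]
    exact map_sum (LinearMap.compRight ℤ (L ∘ₗ d)) _ _ |>.trans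
      (Finset.sum_congr rfl fun k _ ↦ LinearMap.comp_smul _ _ _)
  rw [hcomp, correctionSum, Finset.sum_range_succ']
  simp only [Nat.add_sub_add_right, pow_succ, mul_neg_one, neg_smul, Finset.sum_neg_distrib,
    pow_zero, one_smul, Nat.sub_zero]
  abel

theorem chainDefect_zero (hf : dT ∘ₗ f = f ∘ₗ dP) : chainDefect f d L dT dP 0 = 0 := by
  simp [chainDefect, Fpow, hf]

theorem chainDefect_succ (hcomm : dT ∘ₗ d = d ∘ₗ dT)
    (hL : dT ∘ₗ L + L ∘ₗ dT = f ∘ₗ g - LinearMap.id) (m : ℕ) :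
    chainDefect f d L dT dP (m + 1) = f ∘ₗ Kmap R P T f d L g dP (m + 1) -
      d ∘ₗ Fpow R P T f d L m - (L ∘ₗ d) ∘ₗ chainDefect f d L dT dP m := by
  set F := Fpow R P T f d L
  have hdTL : dT ∘ₗ L = f ∘ₗ g - LinearMap.id - L ∘ₗ dT := eq_sub_of_add_eq hL
  have hdTF : dT ∘ₗ F (m + 1) =
      f ∘ₗ Kmap R P T f d L g dP (m + 1) - d ∘ₗ F m - (L ∘ₗ d) ∘ₗ dT ∘ₗ F m := by
    calc dT ∘ₗ F (m + 1) = (dT ∘ₗ L) ∘ₗ d ∘ₗ F m := rfl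
      _ = f ∘ₗ (g ∘ₗ d ∘ₗ F m) - d ∘ₗ F m - L ∘ₗ (dT ∘ₗ d) ∘ₗ F m := by
        simp only [hdTL, LinearMap.sub_comp, LinearMap.id_comp, LinearMap.comp_assoc]
      _ = _ := by rw [hcomm]; rfl
  have hFdP : F (m + 1) ∘ₗ dP = (L ∘ₗ d) ∘ₗ F m ∘ₗ dP := rfl
  rw [chainDefect, chainDefect, hdTF, hFdP, LinearMap.comp_add, LinearMap.comp_smul, pow_succ,
    mul_neg_one, neg_smul]
  abel

theorem chainDefect_succ_eq (hdd : d ∘ₗ d = 0) (hcomm : dT ∘ₗ d = d ∘ₗ dT)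
    (hf : dT ∘ₗ f = f ∘ₗ dP) (hL : dT ∘ₗ L + L ∘ₗ dT = f ∘ₗ g - LinearMap.id) (m : ℕ) :
    chainDefect f d L dT dP (m + 1) =
      correctionSum f g d L dP (m + 1) - d ∘ₗ Fpow R P T f d L m := by
  induction m with
  | zero =>
    rw [chainDefect_succ f g d L dT dP hcomm hL, chainDefect_zero f d L dT dP hf,
      correctionSum_succ, correctionSum, Finset.sum_range_zero]
    simp only [LinearMap.comp_zero, sub_zero, Fpow]
  | succ m ih =>
    have hLdd : (L ∘ₗ d) ∘ₗ d ∘ₗ Fpow R P T f d L m = 0 := by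
      rw [LinearMap.comp_assoc, ← LinearMap.comp_assoc _ d d, hdd, LinearMap.zero_comp,
        LinearMap.comp_zero]
    rw [chainDefect_succ f g d L dT dP hcomm hL, ih, LinearMap.comp_sub, hLdd, sub_zero,
      correctionSum_succ _ _ _ _ _ (m + 1)]
    abel

end

theorem double_complex_boundary_identity
    (f : P →ₗ[R] T) (g : T →ₗ[R] P) (d L dT : T →ₗ[R] T) (dP : P →ₗ[R] P)
    (hdd : d ∘ₗ d = 0)
    (hcomm : dT ∘ₗ d = d ∘ₗ dT)
    (hf : dT ∘ₗ f = f ∘ₗ dP)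
    (hL : dT ∘ₗ L + L ∘ₗ dT = f ∘ₗ g - LinearMap.id) :
    (dT ∘ₗ Fpow R P T f d L 0 = Fpow R P T f d L 0 ∘ₗ dP) ∧
    ∀ m : ℕ, 1 ≤ m →
      dT ∘ₗ Fpow R P T f d L m + ((-1 : ℤ) ^ (m + 1)) • (Fpow R P T f d L m ∘ₗ dP) =
      (∑ k ∈ Finset.range m,
        ((-1 : ℤ) ^ k) • (Fpow R P T f d L k ∘ₗ Kmap R P T f d L g dP (m - k))) -
      d ∘ₗ Fpow R P T f d L (m - 1) := by
  refine ⟨hf, fun m hm ↦ ?_⟩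
  obtain ⟨n, rfl⟩ := Nat.exists_eq_add_of_le' hm
  exact chainDefect_succ_eq f g d L dT dP hdd hcomm hf hL n

end
end

section
/- (Twisted differential squares to zero.) With K^i as above satisfying the identity of the previous lemma, for every m ≥ 0 one has Σ_{s=0}^m (−1)^s K^{m−s} K^s = 0. Consequently, δ = Σ_s (−1)^p K^s defines a differential (δδ = 0) on the total complex TP_k = ⊕_{p+q=k} P_{p,q}. -/
/-!
Write `∂` for both `dP` and `dT`. Expanding `∂ L = f g - 1 - L ∂` inside `d ∂ F^{k+1} = d ∂ L d F^k`
and using `d d = 0`, `∂ d = d ∂` gives `d ∂ F^{k+1} = d f K^{k+1} - d L (d ∂ F^k)`, so by induction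
`Σ_{s ≤ k} (-1)^s d F^{k-s} K^s = (-1)^k d ∂ F^k`. Composing with `g` turns the left side into all
but the last term of `Σ_{s ≤ k+1} (-1)^s K^{k+1-s} K^s`; since `g` is a chain map and `∂ d = d ∂`,
that last term `(-1)^{k+1} ∂ g d F^k = (-1)^{k+1} g d ∂ F^k` cancels it.
-/

section
variable (R : Type) [Ring R] (P T : Type) [AddCommGroup P] [AddCommGroup T]
  [Module R P] [Module R T]

open Finset

section AltConv
variable {R} {M N Q S : Type*} [AddCommGroup M] [AddCommGroup N] [AddCommGroup Q]
  [AddCommGroup S] [Module R M] [Module R N] [Module R Q] [Module R S]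

def altConv (X : ℕ → (N →ₗ[R] M)) (Y : ℕ → (Q →ₗ[R] N)) (m : ℕ) : Q →ₗ[R] M :=
  ∑ s ∈ range (m + 1), (-1 : ℤ) ^ s • (X (m - s) ∘ₗ Y s)

theorem altConv_succ (X : ℕ → (N →ₗ[R] M)) (Y : ℕ → (Q →ₗ[R] N)) (m : ℕ) :
    altConv X Y (m + 1) =
      altConv (fun j ↦ X (j + 1)) Y m + (-1 : ℤ) ^ (m + 1) • (X 0 ∘ₗ Y (m + 1)) := by
  rw [altConv, sum_range_succ, Nat.sub_self, altConv]
  congr 1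
  refine sum_congr rfl fun s hs ↦ ?_
  rw [Nat.sub_add_comm (mem_range_succ_iff.mp hs)]

theorem comp_altConv (A : M →ₗ[R] S) (X : ℕ → (N →ₗ[R] M)) (Y : ℕ → (Q →ₗ[R] N)) (m : ℕ) :
    A ∘ₗ altConv X Y m = altConv (fun j ↦ A ∘ₗ X j) Y m := by
  ext x
  simp [altConv, LinearMap.sum_apply]

end AltConv

section Perturbation
variable {R P T} {f : P →ₗ[R] T} {g : T →ₗ[R] P} {d L dT : T →ₗ[R] T} {dP : P →ₗ[R] P}

theorem d_comp_dT_comp_Fpow_succ (hdd : d ∘ₗ d = 0) (hcomm : dT ∘ₗ d = d ∘ₗ dT)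
    (hL : dT ∘ₗ L + L ∘ₗ dT = f ∘ₗ g - LinearMap.id) (k : ℕ) :
    d ∘ₗ dT ∘ₗ Fpow R P T f d L (k + 1) =
      d ∘ₗ f ∘ₗ g ∘ₗ d ∘ₗ Fpow R P T f d L k - d ∘ₗ L ∘ₗ d ∘ₗ dT ∘ₗ Fpow R P T f d L k := by
  ext x
  set y := Fpow R P T f d L k x
  have homotopy := LinearMap.congr_fun hL (d y)
  have hdd_y := LinearMap.congr_fun hdd y
  have hcomm_y := LinearMap.congr_fun hcomm y
  simp only [LinearMap.comp_apply, LinearMap.add_apply, LinearMap.sub_apply, LinearMap.id_apply,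
    LinearMap.zero_apply] at homotopy hdd_y hcomm_y
  simp only [Fpow, LinearMap.comp_apply, LinearMap.sub_apply]
  rw [← hcomm_y, eq_sub_iff_add_eq, ← map_add, homotopy, map_sub, hdd_y, sub_zero]

theorem altConv_d_comp_Fpow_Kmap (hdd : d ∘ₗ d = 0) (hcomm : dT ∘ₗ d = d ∘ₗ dT)
    (hf : dT ∘ₗ f = f ∘ₗ dP) (hL : dT ∘ₗ L + L ∘ₗ dT = f ∘ₗ g - LinearMap.id) (k : ℕ) :
    altConv (fun j ↦ d ∘ₗ Fpow R P T f d L j) (Kmap R P T f d L g dP) k =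
      (-1 : ℤ) ^ k • (d ∘ₗ dT ∘ₗ Fpow R P T f d L k) := by
  induction k with
  | zero => simp [altConv, Fpow, Kmap, hf, LinearMap.comp_assoc]
  | succ k ih =>
    have shifted : (fun j ↦ d ∘ₗ Fpow R P T f d L (j + 1)) =
        fun j ↦ (d ∘ₗ L) ∘ₗ (d ∘ₗ Fpow R P T f d L j) := rfl
    rw [altConv_succ, shifted, ← comp_altConv, ih, d_comp_dT_comp_Fpow_succ hdd hcomm hL,
      LinearMap.comp_smul]
    simp only [Fpow, Kmap, pow_succ]
    module

theorem Kmap_zero_comp_Kmap_succ (hcomm : dT ∘ₗ d = d ∘ₗ dT) (hg : dP ∘ₗ g = g ∘ₗ dT) (k : ℕ) :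
    Kmap R P T f d L g dP 0 ∘ₗ Kmap R P T f d L g dP (k + 1) =
      g ∘ₗ d ∘ₗ dT ∘ₗ Fpow R P T f d L k := by
  simp only [Kmap, ← LinearMap.comp_assoc, hg]
  simp only [LinearMap.comp_assoc, hcomm]

end Perturbation

theorem twisted_differential_squares_zero
    (f : P →ₗ[R] T) (g : T →ₗ[R] P) (d L dT : T →ₗ[R] T) (dP : P →ₗ[R] P)
    (hdd : d ∘ₗ d = 0) (hPP : dP ∘ₗ dP = 0)
    (hcomm : dT ∘ₗ d = d ∘ₗ dT)
    (hf : dT ∘ₗ f = f ∘ₗ dP) (hg : dP ∘ₗ g = g ∘ₗ dT)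
    (hL : dT ∘ₗ L + L ∘ₗ dT = f ∘ₗ g - LinearMap.id) :
    ∀ m : ℕ, ∑ s ∈ Finset.range (m + 1),
      ((-1 : ℤ) ^ s) • (Kmap R P T f d L g dP (m - s) ∘ₗ Kmap R P T f d L g dP s) = 0 := by
  rintro (_ | k)
  · simpa [Kmap] using hPP
  · change altConv (Kmap R P T f d L g dP) (Kmap R P T f d L g dP) (k + 1) = 0
    have shifted : (fun j ↦ Kmap R P T f d L g dP (j + 1)) =
        fun j ↦ g ∘ₗ (d ∘ₗ Fpow R P T f d L j) := rfl
    rw [altConv_succ, shifted, ← comp_altConv, altConv_d_comp_Fpow_Kmap hdd hcomm hf hL,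
      Kmap_zero_comp_Kmap_succ hcomm hg, LinearMap.comp_smul, pow_succ, mul_neg_one, neg_smul,
      add_neg_cancel]

end
end
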